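/- arXiv:2409.07902 — 4 statements merged into one kernel-verified Lean document; each statement's English description precedes it below -/
import Mathlib

section
/- Let θ̃^t be a real sequence with update θ̃^{t+1} = θ̃^t − μ(N^t − α), where μ > 0, α ∈ [0,1], each N^t ∈ [0,1], and N^t = 0 whenever θ̃^t < δ for a constant δ satisfying δ > μ(1−α). If θ̃^1 ≥ δ − μ(1−α), then θ̃^t ≥ δ − μ(1−α) > 0 for all t ≥ 1. -/
/-! Below `δ` the update can only raise the threshold (`N = 0`, so it moves by `μ α ≥ 0`), and
from at or above `δ` a single step lowers it by at most `μ (1 - α)`. Hence the level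
`δ - μ (1 - α)` is never crossed downwards. -/

lemma le_sub_mul_sub_of_le {θ N μ α δ : ℝ} (hμ : 0 ≤ μ) (hα : 0 ≤ α) (hN : N ≤ 1)
    (hN0 : θ < δ → N = 0) (hθ : δ - μ * (1 - α) ≤ θ) :
    δ - μ * (1 - α) ≤ θ - μ * (N - α) := by
  by_cases hlt : θ < δ
  · rw [hN0 hlt]
    nlinarith
  · nlinarith

theorem stmt0_general (θ N : ℕ → ℝ) (μ α δ : ℝ)
    (hμ : 0 < μ) (hα0 : 0 ≤ α)
    (hupd : ∀ t, 1 ≤ t → θ (t + 1) = θ t - μ * (N t - α))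
    (hN : ∀ t, 1 ≤ t → N t ∈ Set.Icc (0 : ℝ) 1)
    (hN0 : ∀ t, 1 ≤ t → θ t < δ → N t = 0)
    (hδ : δ > μ * (1 - α))
    (hinit : θ 1 ≥ δ - μ * (1 - α)) :
    ∀ t, 1 ≤ t → θ t ≥ δ - μ * (1 - α) ∧ (0 : ℝ) < δ - μ * (1 - α) := by
  intro t ht
  refine ⟨?_, sub_pos.mpr hδ⟩
  induction t, ht using Nat.le_induction with
  | base => exact hinit
  | succ n hn ih =>
    rw [hupd n hn]
    exact le_sub_mul_sub_of_le hμ.le hα0 (hN n hn).2 (hN0 n hn) ih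

theorem stmt0 (θ N : ℕ → ℝ) (μ α δ : ℝ)
    (hμ : 0 < μ) (hα0 : 0 ≤ α) (hα1 : α ≤ 1)
    (hupd : ∀ t, 1 ≤ t → θ (t + 1) = θ t - μ * (N t - α))
    (hN : ∀ t, 1 ≤ t → N t ∈ Set.Icc (0 : ℝ) 1)
    (hN0 : ∀ t, 1 ≤ t → θ t < δ → N t = 0)
    (hδ : δ > μ * (1 - α))
    (hinit : θ 1 ≥ δ - μ * (1 - α)) :
    ∀ t, 1 ≤ t → θ t ≥ δ - μ * (1 - α) ∧ (0 : ℝ) < δ - μ * (1 - α) :=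
  stmt0_general θ N μ α δ hμ hα0 hupd hN hN0 hδ hinit
end

section
/- Fix γ > 0. Let (λ^t) be a real sequence with λ^1 ≥ −2γ and updates λ^{t+1} = λ^t − γΔλ^t, where Δλ^t = B^t − C^t if B^t > C^t; Δλ^t = max{N^t − α, B^t − C^t} if B^t ≤ C^t and λ^t ≥ −γ; and Δλ^t = 0 if B^t ≤ C^t and λ^t < −γ. Assume B^t ∈ [0,1], C^t ≥ 0, N^t ∈ [0,1], α ∈ [0,1], and additionally B^t = 0 whenever λ^t < 0. Then λ^t ≥ −2γ for all t ≥ 1. -/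
/-!
While `λ ≥ -γ` the increment `Δλ` is at most `1`, so one step lowers `λ` by at most `γ`.
Once `λ < -γ < 0` the sensor sends nothing, hence `B = 0 ≤ C`, the increment vanishes and `λ`
stays put. Either way `λ` never drops below `-2γ`.
-/

namespace ThresholdUpdate

variable {γ α l Δ b c n : ℝ}

lemma increment_le_one (hα0 : 0 ≤ α) (hb : b ≤ 1) (hc : 0 ≤ c) (hn : n ≤ 1)
    (hΔ1 : b > c → Δ = b - c) (hΔ2 : b ≤ c → Δ = max (n - α) (b - c)) :
    Δ ≤ 1 := by
  rcases lt_or_ge c b with hcb | hbc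
  · rw [hΔ1 hcb]; linarith
  · rw [hΔ2 hbc]; exact max_le (by linarith) (by linarith)

lemma increment_eq_zero_of_lt (hγ : 0 < γ) (hc : 0 ≤ c) (hl : l < -γ)
    (hΔ3 : b ≤ c → l < -γ → Δ = 0) (hb0 : l < 0 → b = 0) :
    Δ = 0 :=
  hΔ3 (by rw [hb0 (by linarith)]; exact hc) hl

lemma neg_two_mul_le_step (hγ : 0 < γ) (hα0 : 0 ≤ α) (hl : l ≥ -(2 * γ))
    (hΔ1 : b > c → Δ = b - c) (hΔ2 : b ≤ c → l ≥ -γ → Δ = max (n - α) (b - c))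
    (hΔ3 : b ≤ c → l < -γ → Δ = 0) (hb : b ≤ 1) (hc : 0 ≤ c) (hn : n ≤ 1)
    (hb0 : l < 0 → b = 0) :
    l - γ * Δ ≥ -(2 * γ) := by
  rcases le_or_gt (-γ) l with hlγ | hlγ
  · have hΔ : Δ ≤ 1 := increment_le_one hα0 hb hc hn hΔ1 (hΔ2 · hlγ)
    nlinarith
  · rw [increment_eq_zero_of_lt hγ hc hlγ hΔ3 hb0]
    linarith

end ThresholdUpdate

open ThresholdUpdate in
theorem stmt3_general (γ α : ℝ) (lam Δ B C N : ℕ → ℝ)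
    (hγ : 0 < γ) (hα0 : 0 ≤ α)
    (hinit : lam 1 ≥ -(2 * γ))
    (hupd : ∀ t, 1 ≤ t → lam (t + 1) = lam t - γ * Δ t)
    (hΔ1 : ∀ t, 1 ≤ t → B t > C t → Δ t = B t - C t)
    (hΔ2 : ∀ t, 1 ≤ t → B t ≤ C t → lam t ≥ -γ → Δ t = max (N t - α) (B t - C t))
    (hΔ3 : ∀ t, 1 ≤ t → B t ≤ C t → lam t < -γ → Δ t = 0)
    (hB : ∀ t, 1 ≤ t → B t ∈ Set.Icc (0 : ℝ) 1)
    (hC : ∀ t, 1 ≤ t → 0 ≤ C t)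
    (hN : ∀ t, 1 ≤ t → N t ∈ Set.Icc (0 : ℝ) 1)
    (hB0 : ∀ t, 1 ≤ t → lam t < 0 → B t = 0) :
    ∀ t, 1 ≤ t → lam t ≥ -(2 * γ) := by
  intro t ht
  induction t, ht using Nat.le_induction with
  | base => exact hinit
  | succ t ht ih =>
    rw [hupd t ht]
    exact neg_two_mul_le_step hγ hα0 ih (hΔ1 t ht) (hΔ2 t ht) (hΔ3 t ht) (hB t ht).2 (hC t ht)
      (hN t ht).2 (hB0 t ht)

theorem stmt3 (γ α : ℝ) (lam Δ B C N : ℕ → ℝ)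
    (hγ : 0 < γ) (hα0 : 0 ≤ α) (hα1 : α ≤ 1)
    (hinit : lam 1 ≥ -(2 * γ))
    (hupd : ∀ t, 1 ≤ t → lam (t + 1) = lam t - γ * Δ t)
    (hΔ1 : ∀ t, 1 ≤ t → B t > C t → Δ t = B t - C t)
    (hΔ2 : ∀ t, 1 ≤ t → B t ≤ C t → lam t ≥ -γ → Δ t = max (N t - α) (B t - C t))
    (hΔ3 : ∀ t, 1 ≤ t → B t ≤ C t → lam t < -γ → Δ t = 0)
    (hB : ∀ t, 1 ≤ t → B t ∈ Set.Icc (0 : ℝ) 1)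
    (hC : ∀ t, 1 ≤ t → 0 ≤ C t)
    (hN : ∀ t, 1 ≤ t → N t ∈ Set.Icc (0 : ℝ) 1)
    (hB0 : ∀ t, 1 ≤ t → lam t < 0 → B t = 0) :
    ∀ t, 1 ≤ t → lam t ≥ -(2 * γ) :=
  stmt3_general γ α lam Δ B C N hγ hα0 hinit hupd hΔ1 hΔ2 hΔ3 hB hC hN hB0
end

section
/- Under the CD-CRC local-threshold dynamics (λ^{t+1} = λ^t − γΔλ^t with the three-case definition of Δλ^t, step size γ > 0, B^t ∈ [0,1], C^t ≥ 0, N^t ∈ [0,1], α ∈ [0,1]), one always has Δλ^t ≥ B^t − C^t. Consequently, if there are K independent such sequences (λ_k^t, B_k^t, C_k^t) with ∑_{k=1}^K C_k^t = C for all t, and λ_k^t ≥ −2γ for all t and k, then for every T ≥ 1: (1/T)∑_{t=1}^T ∑_{k=1}^K B_k^t ≤ C + ∑_{k=1}^K (λ_k^1 + 2γ)/(γT). -/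
/-!
In each of the three cases of the update rule the step `Δλ` is at least `B − C`: it equals
`B − C`, is a maximum with `B − C`, or is `0 ≥ B − C` because `B ≤ C`. Summing the update telescopes,
`λ^{T+1} = λ^1 − γ ∑_{t ≤ T} Δλ^t`, so the lower bound `λ^{T+1} ≥ −2γ` caps `∑_t (B^t − C^t)` by
`(λ^1 + 2γ)/γ` for each sensor. Summing over the sensors and using `∑_k C_k^t = C` gives the bound.
-/

open Finset

theorem sub_le_of_threshold_rule {b c l n α γ d : ℝ} (h₁ : b > c → d = b - c)
    (h₂ : b ≤ c → l ≥ -γ → d = max (n - α) (b - c)) (h₃ : b ≤ c → l < -γ → d = 0) :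
    d ≥ b - c := by
  rcases lt_or_ge c b with hcb | hbc
  · exact (h₁ hcb).ge
  · rcases le_or_gt (-γ) l with hl | hl
    · exact (h₂ hbc hl).symm ▸ le_max_right _ _
    · rw [h₃ hbc hl]
      linarith

theorem eq_sub_mul_sum_Icc_of_update {f d : ℕ → ℝ} {γ : ℝ}
    (h : ∀ t, 1 ≤ t → f (t + 1) = f t - γ * d t) (T : ℕ) :
    f (T + 1) = f 1 - γ * ∑ t ∈ Icc 1 T, d t := by
  induction T with
  | zero => simp
  | succ T ih =>
    rw [h (T + 1) (by omega), ih, sum_Icc_succ_top (by omega)]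
    ring

theorem sum_Icc_le_of_update {f d : ℕ → ℝ} {γ L : ℝ} (hγ : 0 < γ)
    (h : ∀ t, 1 ≤ t → f (t + 1) = f t - γ * d t) {T : ℕ} (hL : L ≤ f (T + 1)) :
    ∑ t ∈ Icc 1 T, d t ≤ (f 1 - L) / γ := by
  rw [le_div_iff₀ hγ, mul_comm]
  linarith [eq_sub_mul_sum_Icc_of_update h T]

theorem stmt4_general (K : ℕ) (γ α Ctot : ℝ)
    (lam Δ B C : Fin K → ℕ → ℝ) (N : ℕ → ℝ)
    (hγ : 0 < γ)
    (hupd : ∀ k t, 1 ≤ t → lam k (t + 1) = lam k t - γ * Δ k t)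
    (hΔ1 : ∀ k t, 1 ≤ t → B k t > C k t → Δ k t = B k t - C k t)
    (hΔ2 : ∀ k t, 1 ≤ t → B k t ≤ C k t → lam k t ≥ -γ →
      Δ k t = max (N t - α) (B k t - C k t))
    (hΔ3 : ∀ k t, 1 ≤ t → B k t ≤ C k t → lam k t < -γ → Δ k t = 0)
    (hCsum : ∀ t, 1 ≤ t → ∑ k, C k t = Ctot)
    (hlb : ∀ k t, 1 ≤ t → lam k t ≥ -(2 * γ)) :
    (∀ k t, 1 ≤ t → Δ k t ≥ B k t - C k t) ∧
    ∀ T : ℕ, 1 ≤ T →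
      (1 / (T : ℝ)) * ∑ t ∈ Finset.Icc 1 T, ∑ k, B k t ≤
        Ctot + ∑ k, (lam k 1 + 2 * γ) / (γ * T) := by
  have hstep : ∀ k t, 1 ≤ t → Δ k t ≥ B k t - C k t := fun k t ht =>
    sub_le_of_threshold_rule (hΔ1 k t ht) (hΔ2 k t ht) (hΔ3 k t ht)
  refine ⟨hstep, fun T hT => ?_⟩
  have hsensor : ∀ k, ∑ t ∈ Icc 1 T, (B k t - C k t) ≤ (lam k 1 + 2 * γ) / γ := fun k =>
    calc ∑ t ∈ Icc 1 T, (B k t - C k t)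
        ≤ ∑ t ∈ Icc 1 T, Δ k t := sum_le_sum fun t ht => hstep k t (mem_Icc.1 ht).1
      _ ≤ (lam k 1 - -(2 * γ)) / γ := sum_Icc_le_of_update hγ (hupd k) (hlb k (T + 1) (by omega))
      _ = (lam k 1 + 2 * γ) / γ := by rw [sub_neg_eq_add]
  have hcapacity : ∑ t ∈ Icc 1 T, ∑ k, C k t = T * Ctot := by
    rw [sum_congr rfl fun t ht => hCsum t (mem_Icc.1 ht).1]
    simp
  have hT : (0 : ℝ) < T := by exact_mod_cast hT
  rw [one_div, inv_mul_le_iff₀ hT]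
  calc ∑ t ∈ Icc 1 T, ∑ k, B k t
      = ∑ t ∈ Icc 1 T, ∑ k, C k t + ∑ k, ∑ t ∈ Icc 1 T, (B k t - C k t) := by
        simp only [sum_sub_distrib]
        rw [sum_comm (f := fun t k => B k t), sum_comm (f := fun t k => C k t)]
        ring
    _ ≤ T * Ctot + ∑ k, (lam k 1 + 2 * γ) / γ := by
        rw [hcapacity]
        gcongr with k
        exact hsensor k
    _ = T * (Ctot + ∑ k, (lam k 1 + 2 * γ) / (γ * T)) := by
        rw [mul_add, mul_sum]
        congr 1
        refine sum_congr rfl fun k _ => ?_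
        field_simp

theorem stmt4 (K : ℕ) (γ α Ctot : ℝ)
    (lam Δ B C : Fin K → ℕ → ℝ) (N : ℕ → ℝ)
    (hγ : 0 < γ) (hα0 : 0 ≤ α) (hα1 : α ≤ 1)
    (hupd : ∀ k t, 1 ≤ t → lam k (t + 1) = lam k t - γ * Δ k t)
    (hΔ1 : ∀ k t, 1 ≤ t → B k t > C k t → Δ k t = B k t - C k t)
    (hΔ2 : ∀ k t, 1 ≤ t → B k t ≤ C k t → lam k t ≥ -γ →
      Δ k t = max (N t - α) (B k t - C k t))
    (hΔ3 : ∀ k t, 1 ≤ t → B k t ≤ C k t → lam k t < -γ → Δ k t = 0)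
    (hB : ∀ k t, 1 ≤ t → B k t ∈ Set.Icc (0 : ℝ) 1)
    (hC : ∀ k t, 1 ≤ t → 0 ≤ C k t)
    (hN : ∀ t, 1 ≤ t → N t ∈ Set.Icc (0 : ℝ) 1)
    (hCsum : ∀ t, 1 ≤ t → ∑ k, C k t = Ctot)
    (hlb : ∀ k t, 1 ≤ t → lam k t ≥ -(2 * γ)) :
    (∀ k t, 1 ≤ t → Δ k t ≥ B k t - C k t) ∧
    ∀ T : ℕ, 1 ≤ T →
      (1 / (T : ℝ)) * ∑ t ∈ Finset.Icc 1 T, ∑ k, B k t ≤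
        Ctot + ∑ k, (lam k 1 + 2 * γ) / (γ * T) :=
  stmt4_general K γ α Ctot lam Δ B C N hγ hupd hΔ1 hΔ2 hΔ3 hCsum hlb
end

section
/- Suppose θ̃^t is updated by θ̃^{t+1} = θ̃^t − μ(N^t − α) with μ > 0, α ∈ [0,1], N^t ∈ [0,1], where N^t = 0 whenever θ̃^t < δ and N^t = 1 whenever θ̃^t > 1 + δ. If δ − μ(1−α) ≤ θ̃^1 ≤ 1 + δ + μα and δ > μ(1−α), then δ − μ(1−α) ≤ θ̃^t ≤ 1 + δ + μα for all t ≥ 1. -/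
theorem stmt12 (θ N : ℕ → ℝ) (μ α δ : ℝ)
    (hμ : 0 < μ) (hα0 : 0 ≤ α) (hα1 : α ≤ 1)
    (hupd : ∀ t, 1 ≤ t → θ (t + 1) = θ t - μ * (N t - α))
    (hN : ∀ t, 1 ≤ t → N t ∈ Set.Icc (0 : ℝ) 1)
    (hN0 : ∀ t, 1 ≤ t → θ t < δ → N t = 0)
    (hN1 : ∀ t, 1 ≤ t → θ t > 1 + δ → N t = 1)
    (hδ : δ > μ * (1 - α))
    (hinit1 : δ - μ * (1 - α) ≤ θ 1) (hinit2 : θ 1 ≤ 1 + δ + μ * α) :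
    ∀ t, 1 ≤ t → δ - μ * (1 - α) ≤ θ t ∧ θ t ≤ 1 + δ + μ * α := by
  intro t ht
  induction t with
  | zero => omega
  | succ n ih =>
    rcases Nat.eq_or_lt_of_le ht with h | h
    · simpa [← h] using And.intro hinit1 hinit2
    · have hn : 1 ≤ n := by omega
      obtain ⟨ih1, ih2⟩ := ih hn
      obtain ⟨hN0n, hN1n⟩ := hN n hn
      rw [hupd n hn]
      constructor
      · rcases lt_or_ge (θ n) δ with hc | hc
        · have := hN0 n hn hc
          rw [this]
          nlinarith
        · nlinarith
      · rcases lt_or_ge (1 + δ) (θ n) with hc | hc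
        · have := hN1 n hn hc
          rw [this]
          nlinarith
        · nlinarith
end
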